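/- Let H be a k-bialgebra and σ : H ⊗ H → k a k-bilinear map satisfying conditions (L2), (L3), (L4) and (L5) for all elements of H. Let S ⊆ H be a subset generating H as a k-algebra. If condition (L1), ∑ σ(x₍₁₎ ⊗ y) x₍₂₎ = ∑ σ(x₍₂₎ ⊗ y) x₍₁₎, holds for all x, y ∈ S, then (L1) holds for all x, y ∈ H. -/

import Mathlib

open TensorProduct

noncomputable section

variable (k : Type*) [Field k] (H : Type*) [Ring H] [Algebra k H]

/-- Condition (L1) for a comultiplication Δ and a bilinear map σ:
∑ σ(x₍₁₎ ⊗ y) x₍₂₎ = ∑ σ(x₍₂₎ ⊗ y) x₍₁₎, as an equality of linear maps H ⊗ H → H. -/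
def CondL1 (Δ : H →ₗ[k] H ⊗[k] H) (σ : H ⊗[k] H →ₗ[k] k) : Prop :=
  (TensorProduct.rid k H).toLinearMap ∘ₗ
      TensorProduct.map LinearMap.id σ ∘ₗ
      (TensorProduct.assoc k H H H).toLinearMap ∘ₗ
      TensorProduct.map ((TensorProduct.comm k H H).toLinearMap ∘ₗ Δ) LinearMap.id =
    (TensorProduct.rid k H).toLinearMap ∘ₗ
      TensorProduct.map LinearMap.id σ ∘ₗ
      (TensorProduct.assoc k H H H).toLinearMap ∘ₗ
      TensorProduct.map Δ LinearMap.id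

/-- Condition (L2): σ(x ⊗ 1) = ε(x). -/
def CondL2 (ε : H →ₗ[k] k) (σ : H ⊗[k] H →ₗ[k] k) : Prop :=
  ∀ x : H, σ (x ⊗ₜ[k] (1 : H)) = ε x

/-- Condition (L3): σ(x ⊗ yz) = ∑ σ(x₍₁₎ ⊗ y) σ(x₍₂₎ ⊗ z),
as an equality of linear maps H ⊗ (H ⊗ H) → k. -/
def CondL3 (Δ : H →ₗ[k] H ⊗[k] H) (σ : H ⊗[k] H →ₗ[k] k) : Prop :=
  σ ∘ₗ TensorProduct.map LinearMap.id (LinearMap.mul' k H) =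
    (TensorProduct.lid k k).toLinearMap ∘ₗ
      TensorProduct.map σ σ ∘ₗ
      (TensorProduct.tensorTensorTensorComm k H H H H).toLinearMap ∘ₗ
      TensorProduct.map Δ LinearMap.id

/-- Condition (L4): σ(1 ⊗ x) = ε(x). -/
def CondL4 (ε : H →ₗ[k] k) (σ : H ⊗[k] H →ₗ[k] k) : Prop :=
  ∀ x : H, σ ((1 : H) ⊗ₜ[k] x) = ε x

/-- Condition (L5): σ(xy ⊗ z) = ∑ σ(y ⊗ z₍₁₎) σ(x ⊗ z₍₂₎),
as an equality of linear maps (H ⊗ H) ⊗ H → k. -/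
def CondL5 (Δ : H →ₗ[k] H ⊗[k] H) (σ : H ⊗[k] H →ₗ[k] k) : Prop :=
  σ ∘ₗ TensorProduct.map (LinearMap.mul' k H) LinearMap.id =
    (TensorProduct.lid k k).toLinearMap ∘ₗ
      TensorProduct.map σ σ ∘ₗ
      (TensorProduct.tensorTensorTensorComm k H H H H).toLinearMap ∘ₗ
      TensorProduct.map LinearMap.id Δ ∘ₗ
      TensorProduct.map (TensorProduct.comm k H H).toLinearMap LinearMap.id

/-- (H, σ) is a Long bialgebra (relative to comultiplication Δ and counit ε):
conditions (L1)–(L5) hold. -/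
def IsLongBialgebra (Δ : H →ₗ[k] H ⊗[k] H) (ε : H →ₗ[k] k)
    (σ : H ⊗[k] H →ₗ[k] k) : Prop :=
  CondL1 k H Δ σ ∧ CondL2 k H ε σ ∧ CondL3 k H Δ σ ∧ CondL4 k H ε σ ∧ CondL5 k H Δ σ

end

noncomputable section

variable (k : Type*) [Field k] (H : Type*) [Ring H] [Algebra k H]

/-- The left-hand side of (L1): x ⊗ y ↦ ∑ σ(x₍₁₎ ⊗ y) x₍₂₎. -/
def L1lhs (Δ : H →ₗ[k] H ⊗[k] H) (σ : H ⊗[k] H →ₗ[k] k) : H ⊗[k] H →ₗ[k] H :=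
  (TensorProduct.rid k H).toLinearMap ∘ₗ
    TensorProduct.map LinearMap.id σ ∘ₗ
    (TensorProduct.assoc k H H H).toLinearMap ∘ₗ
    TensorProduct.map ((TensorProduct.comm k H H).toLinearMap ∘ₗ Δ) LinearMap.id

/-- The right-hand side of (L1): x ⊗ y ↦ ∑ σ(x₍₂₎ ⊗ y) x₍₁₎. -/
def L1rhs (Δ : H →ₗ[k] H ⊗[k] H) (σ : H ⊗[k] H →ₗ[k] k) : H ⊗[k] H →ₗ[k] H :=
  (TensorProduct.rid k H).toLinearMap ∘ₗ
    TensorProduct.map LinearMap.id σ ∘ₗ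
    (TensorProduct.assoc k H H H).toLinearMap ∘ₗ
    TensorProduct.map Δ LinearMap.id

end

/-!
Write `x ↼ f = ∑ f(x₁) x₂` (`rightHit`) and `f ⇀ x = ∑ x₁ f(x₂)` (`leftHit`) for the two hit
actions of the convolution algebra `H* = Hom(H, k)` on `H`, and `ψ y = σ(- ⊗ y)` (`rightSlice`),
so that (L1) reads `x ↼ ψ y = ψ y ⇀ x`.

By (L2) and (L3), `ψ : H → H*` is an algebra map. Since `↼` is a right action, `⇀` a left action,
and the two commute by coassociativity, for a fixed `x` the `f ∈ H*` with `x ↼ f = f ⇀ x` form a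
subalgebra of `H*`; pulling it back along `ψ` extends (L1) from `y ∈ S` to all `y`.
By (L5) and multiplicativity of `Δ`, `(x x') ↼ ψ y = ∑ (x ↼ ψ y₂) (x' ↼ ψ y₁)`, and likewise
for `⇀`, so the `x` satisfying (L1) against every `y` form a subalgebra of `H`, containing `S`.
-/

open scoped Coalgebra
open Coalgebra (comul counit Repr)

section Coalgebra
variable {R C : Type*} [CommSemiring R] [AddCommMonoid C] [Module R C] [Coalgebra R C]

variable (R C) in
noncomputable def rightHit : WithConv (C →ₗ[R] R) →ₗ[R] Module.End R C where
  toFun f := (TensorProduct.lid R C).toLinearMap ∘ₗ f.ofConv.rTensor C ∘ₗ comul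
  map_add' f g := by ext; simp [LinearMap.rTensor_add]
  map_smul' c f := by ext; simp [LinearMap.rTensor_smul]

variable (R C) in
noncomputable def leftHit : WithConv (C →ₗ[R] R) →ₗ[R] Module.End R C where
  toFun f := (TensorProduct.rid R C).toLinearMap ∘ₗ f.ofConv.lTensor C ∘ₗ comul
  map_add' f g := by ext; simp [LinearMap.lTensor_add]
  map_smul' c f := by ext; simp [LinearMap.lTensor_smul]

lemma rightHit_apply (f : WithConv (C →ₗ[R] R)) (x : C) {ι : Type*} (𝓡 : Repr R x ι) :
    rightHit R C f x = ∑ i ∈ 𝓡.index, f (𝓡.left i) • 𝓡.right i := by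
  simp [rightHit, ← 𝓡.eq]

lemma leftHit_apply (f : WithConv (C →ₗ[R] R)) (x : C) {ι : Type*} (𝓡 : Repr R x ι) :
    leftHit R C f x = ∑ i ∈ 𝓡.index, f (𝓡.right i) • 𝓡.left i := by
  simp [leftHit, ← 𝓡.eq]

lemma rightHit_one : rightHit R C 1 = 1 := by
  ext x
  simp [rightHit_apply _ _ (ℛ R x), Coalgebra.sum_counit_smul]

lemma leftHit_one : leftHit R C 1 = 1 := by
  ext x
  have h := congrArg (TensorProduct.rid R C) (Coalgebra.sum_tmul_counit_eq (ℛ R x))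
  simp only [map_sum, TensorProduct.rid_tmul, one_smul] at h
  simpa [leftHit_apply _ _ (ℛ R x)] using h

lemma rightHit_mul (f g : WithConv (C →ₗ[R] R)) :
    rightHit R C (f * g) = rightHit R C g * rightHit R C f := by
  ext x
  have h := congrArg ((TensorProduct.lid R C).toLinearMap ∘ₗ
      TensorProduct.map f.ofConv ((TensorProduct.lid R C).toLinearMap ∘ₗ g.ofConv.rTensor C))
    (Coalgebra.sum_tmul_tmul_eq (ℛ R x) (fun _ ↦ ℛ R _) (fun _ ↦ ℛ R _))
  simp only [map_sum, LinearMap.comp_apply, TensorProduct.map_tmul, LinearMap.rTensor_tmul,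
    LinearEquiv.coe_coe, TensorProduct.lid_tmul] at h
  rw [Module.End.mul_apply, rightHit_apply f x (ℛ R x), map_sum, rightHit_apply _ x (ℛ R x)]
  simp only [map_smul]
  simp only [rightHit_apply g _ (ℛ R _), Finset.smul_sum, (ℛ R _).convMul_apply,
    Finset.sum_smul, mul_smul]
  exact h

lemma leftHit_mul (f g : WithConv (C →ₗ[R] R)) :
    leftHit R C (f * g) = leftHit R C f * leftHit R C g := by
  ext x
  have h := congrArg ((TensorProduct.rid R C).toLinearMap ∘ₗ
      (LinearMap.mul' R R ∘ₗ TensorProduct.map f.ofConv g.ofConv).lTensor C)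
    (Coalgebra.sum_tmul_tmul_eq (ℛ R x) (fun _ ↦ ℛ R _) (fun _ ↦ ℛ R _))
  simp only [map_sum, LinearMap.comp_apply, TensorProduct.map_tmul, LinearMap.lTensor_tmul,
    LinearEquiv.coe_coe, TensorProduct.rid_tmul, LinearMap.mul'_apply] at h
  rw [Module.End.mul_apply, leftHit_apply g x (ℛ R x), map_sum, leftHit_apply _ x (ℛ R x)]
  simp only [map_smul]
  simp only [leftHit_apply f _ (ℛ R _), Finset.smul_sum, (ℛ R _).convMul_apply,
    Finset.sum_smul, smul_smul, mul_comm (g.ofConv _)]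
  exact h.symm

lemma leftHit_mul_rightHit (f g : WithConv (C →ₗ[R] R)) :
    leftHit R C f * rightHit R C g = rightHit R C g * leftHit R C f := by
  ext x
  have h := congrArg ((TensorProduct.lid R C).toLinearMap ∘ₗ
      TensorProduct.map g.ofConv ((TensorProduct.rid R C).toLinearMap ∘ₗ f.ofConv.lTensor C))
    (Coalgebra.sum_tmul_tmul_eq (ℛ R x) (fun _ ↦ ℛ R _) (fun _ ↦ ℛ R _))
  simp only [map_sum, LinearMap.comp_apply, TensorProduct.map_tmul, LinearMap.lTensor_tmul,
    LinearEquiv.coe_coe, TensorProduct.rid_tmul, TensorProduct.lid_tmul] at h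
  rw [Module.End.mul_apply, Module.End.mul_apply, rightHit_apply g x (ℛ R x), map_sum,
    leftHit_apply f x (ℛ R x), map_sum]
  simp only [map_smul]
  simp only [leftHit_apply f _ (ℛ R _), rightHit_apply g _ (ℛ R _), Finset.smul_sum,
    smul_comm (f.ofConv _)]
  exact h.symm

variable (R) in
noncomputable def hitEqualizer (x : C) : Subalgebra R (WithConv (C →ₗ[R] R)) :=
  (LinearMap.eqLocus ((rightHit R C).flip x) ((leftHit R C).flip x)).toSubalgebra
    (by simp [rightHit_one, leftHit_one])
    fun f g (hf : rightHit R C f x = leftHit R C f x) (hg : rightHit R C g x = leftHit R C g x) ↦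
      show rightHit R C (f * g) x = leftHit R C (f * g) x by
      rw [rightHit_mul, leftHit_mul, Module.End.mul_apply, Module.End.mul_apply, hf,
        ← Module.End.mul_apply, ← leftHit_mul_rightHit, Module.End.mul_apply, hg]

lemma mem_hitEqualizer {x : C} {f : WithConv (C →ₗ[R] R)} :
    f ∈ hitEqualizer R x ↔ rightHit R C f x = leftHit R C f x := Iff.rfl

end Coalgebra

section Bialgebra
variable {R B : Type*} [CommSemiring R] [Semiring B] [Bialgebra R B]

lemma rightHit_apply_one (f : WithConv (B →ₗ[R] R)) : rightHit R B f 1 = f 1 • 1 := by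
  simp [rightHit, Algebra.TensorProduct.one_def]

lemma leftHit_apply_one (f : WithConv (B →ₗ[R] R)) : leftHit R B f 1 = f 1 • 1 := by
  simp [leftHit, Algebra.TensorProduct.one_def]

end Bialgebra

lemma condL1_iff {k H : Type*} [Field k] [Ring H] [Algebra k H] (Δ : H →ₗ[k] H ⊗[k] H)
    (σ : H ⊗[k] H →ₗ[k] k) : CondL1 k H Δ σ ↔ L1lhs k H Δ σ = L1rhs k H Δ σ := Iff.rfl

section Long
variable {k H : Type*} [Field k] [Ring H] [Bialgebra k H] (σ : H ⊗[k] H →ₗ[k] k)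

noncomputable def rightSlice : H →ₗ[k] WithConv (H →ₗ[k] k) :=
  (WithConv.linearEquiv k (H →ₗ[k] k)).symm.toLinearMap ∘ₗ (TensorProduct.curry σ).flip

@[simp] lemma rightSlice_apply (x y : H) : rightSlice σ y x = σ (x ⊗ₜ y) := rfl

lemma L1lhs_tmul (x y : H) :
    L1lhs k H comul σ (x ⊗ₜ y) = rightHit k H (rightSlice σ y) x := by
  simp [L1lhs, rightHit_apply _ x (ℛ k x), ← (ℛ k x).eq, TensorProduct.sum_tmul]

lemma L1rhs_tmul (x y : H) :
    L1rhs k H comul σ (x ⊗ₜ y) = leftHit k H (rightSlice σ y) x := by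
  simp [L1rhs, leftHit_apply _ x (ℛ k x), ← (ℛ k x).eq, TensorProduct.sum_tmul]

variable {σ}

lemma rightSlice_one (hL2 : CondL2 k H counit σ) : rightSlice σ 1 = 1 := by
  ext x
  simp [hL2 x]

lemma rightSlice_mul (hL3 : CondL3 k H comul σ) (y z : H) :
    rightSlice σ (y * z) = rightSlice σ y * rightSlice σ z := by
  ext x
  have h := LinearMap.congr_fun hL3 (x ⊗ₜ (y ⊗ₜ z))
  simp only [LinearMap.coe_comp, Function.comp_apply, TensorProduct.map_tmul, LinearMap.id_coe,
    id_eq, LinearMap.mul'_apply, LinearEquiv.coe_coe, ← (ℛ k x).eq, TensorProduct.sum_tmul,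
    map_sum, TensorProduct.tensorTensorTensorComm_tmul, TensorProduct.lid_tmul,
    smul_eq_mul] at h
  simp [(ℛ k x).convMul_apply, h]

noncomputable def rightSliceAlgHom (hL2 : CondL2 k H counit σ) (hL3 : CondL3 k H comul σ) :
    H →ₐ[k] WithConv (H →ₗ[k] k) :=
  AlgHom.ofLinearMap (rightSlice σ) (rightSlice_one hL2) (rightSlice_mul hL3)

lemma rightHit_rightSlice_eq_leftHit_of_adjoin_eq_top (hL2 : CondL2 k H counit σ)
    (hL3 : CondL3 k H comul σ) {S : Set H} (hS : Algebra.adjoin k S = ⊤) {x : H}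
    (hx : ∀ s ∈ S, rightHit k H (rightSlice σ s) x = leftHit k H (rightSlice σ s) x) (y : H) :
    rightHit k H (rightSlice σ y) x = leftHit k H (rightSlice σ y) x := by
  have hle : Algebra.adjoin k S ≤ (hitEqualizer k x).comap (rightSliceAlgHom hL2 hL3) :=
    Algebra.adjoin_le hx
  exact hle (hS ▸ Algebra.mem_top : y ∈ Algebra.adjoin k S)

lemma CondL5.apply_mul_tmul (hL5 : CondL5 k H comul σ) (a a' y : H) {ι : Type*}
    (𝓡 : Repr k y ι) :
    σ ((a * a') ⊗ₜ y) = ∑ i ∈ 𝓡.index, σ (a ⊗ₜ 𝓡.right i) * σ (a' ⊗ₜ 𝓡.left i) := by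
  have h := LinearMap.congr_fun hL5 ((a ⊗ₜ a') ⊗ₜ y)
  simpa [← 𝓡.eq, TensorProduct.tmul_sum, mul_comm] using h

lemma rightHit_rightSlice_mul (hL5 : CondL5 k H comul σ) (x x' y : H) {ι : Type*}
    (𝓡 : Repr k y ι) :
    rightHit k H (rightSlice σ y) (x * x') =
      ∑ i ∈ 𝓡.index, rightHit k H (rightSlice σ (𝓡.right i)) x *
        rightHit k H (rightSlice σ (𝓡.left i)) x' := by
  rw [rightHit_apply _ _ ((ℛ k x).mul (ℛ k x'))]
  simp only [rightHit_apply _ x (ℛ k x), rightHit_apply _ x' (ℛ k x'), rightSlice_apply,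
    Coalgebra.Repr.mul_index, Coalgebra.Repr.mul_left, Coalgebra.Repr.mul_right,
    hL5.apply_mul_tmul _ _ _ 𝓡, Finset.sum_mul_sum, Finset.sum_smul, Finset.sum_product,
    smul_mul_smul]
  exact (Finset.sum_congr rfl fun _ _ ↦ Finset.sum_comm).trans Finset.sum_comm

lemma leftHit_rightSlice_mul (hL5 : CondL5 k H comul σ) (x x' y : H) {ι : Type*}
    (𝓡 : Repr k y ι) :
    leftHit k H (rightSlice σ y) (x * x') =
      ∑ i ∈ 𝓡.index, leftHit k H (rightSlice σ (𝓡.right i)) x *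
        leftHit k H (rightSlice σ (𝓡.left i)) x' := by
  rw [leftHit_apply _ _ ((ℛ k x).mul (ℛ k x'))]
  simp only [leftHit_apply _ x (ℛ k x), leftHit_apply _ x' (ℛ k x'), rightSlice_apply,
    Coalgebra.Repr.mul_index, Coalgebra.Repr.mul_left, Coalgebra.Repr.mul_right,
    hL5.apply_mul_tmul _ _ _ 𝓡, Finset.sum_mul_sum, Finset.sum_smul, Finset.sum_product,
    smul_mul_smul]
  exact (Finset.sum_congr rfl fun _ _ ↦ Finset.sum_comm).trans Finset.sum_comm

variable (σ) in
noncomputable def condL1Locus (hL5 : CondL5 k H comul σ) : Subalgebra k H :=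
  (⨅ y, LinearMap.eqLocus (rightHit k H (rightSlice σ y)) (leftHit k H (rightSlice σ y)))
    |>.toSubalgebra (by simp [rightHit_apply_one, leftHit_apply_one]) fun x x' hx hx' ↦ by
      simp only [Submodule.mem_iInf, LinearMap.mem_eqLocus] at hx hx' ⊢
      intro y
      simp only [rightHit_rightSlice_mul hL5 x x' y (ℛ k y),
        leftHit_rightSlice_mul hL5 x x' y (ℛ k y), hx, hx']

lemma mem_condL1Locus (hL5 : CondL5 k H comul σ) {x : H} :
    x ∈ condL1Locus σ hL5 ↔
      ∀ y, rightHit k H (rightSlice σ y) x = leftHit k H (rightSlice σ y) x := by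
  simp [condL1Locus]

end Long

theorem L1_of_L1_on_generators_general
    {k : Type*} [Field k] {H : Type*} [Ring H] [Bialgebra k H]
    (σ : H ⊗[k] H →ₗ[k] k)
    (hL2 : CondL2 k H (Coalgebra.counit : H →ₗ[k] k) σ)
    (hL3 : CondL3 k H (Coalgebra.comul : H →ₗ[k] H ⊗[k] H) σ)
    (hL5 : CondL5 k H (Coalgebra.comul : H →ₗ[k] H ⊗[k] H) σ)
    (S : Set H) (hS : Algebra.adjoin k S = ⊤)
    (hL1gen : ∀ x ∈ S, ∀ y ∈ S,
      L1lhs k H (Coalgebra.comul : H →ₗ[k] H ⊗[k] H) σ (x ⊗ₜ[k] y) =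
      L1rhs k H (Coalgebra.comul : H →ₗ[k] H ⊗[k] H) σ (x ⊗ₜ[k] y)) :
    CondL1 k H (Coalgebra.comul : H →ₗ[k] H ⊗[k] H) σ := by
  have hgen : S ⊆ condL1Locus σ hL5 := fun x hx ↦
    (mem_condL1Locus hL5).2 <| rightHit_rightSlice_eq_leftHit_of_adjoin_eq_top hL2 hL3 hS
      fun s hs ↦ by simpa only [L1lhs_tmul, L1rhs_tmul] using hL1gen x hx s hs
  have hall : ∀ x, x ∈ condL1Locus σ hL5 := fun x ↦ Algebra.adjoin_le hgen (hS ▸ Algebra.mem_top)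
  refine (condL1_iff _ σ).2 (TensorProduct.ext' fun x y ↦ ?_)
  rw [L1lhs_tmul, L1rhs_tmul]
  exact (mem_condL1Locus hL5).1 (hall x) y

theorem L1_of_L1_on_generators
    {k : Type*} [Field k] {H : Type*} [Ring H] [Bialgebra k H]
    (σ : H ⊗[k] H →ₗ[k] k)
    (hL2 : CondL2 k H (Coalgebra.counit : H →ₗ[k] k) σ)
    (hL3 : CondL3 k H (Coalgebra.comul : H →ₗ[k] H ⊗[k] H) σ)
    (hL4 : CondL4 k H (Coalgebra.counit : H →ₗ[k] k) σ)
    (hL5 : CondL5 k H (Coalgebra.comul : H →ₗ[k] H ⊗[k] H) σ)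
    (S : Set H) (hS : Algebra.adjoin k S = ⊤)
    (hL1gen : ∀ x ∈ S, ∀ y ∈ S,
      L1lhs k H (Coalgebra.comul : H →ₗ[k] H ⊗[k] H) σ (x ⊗ₜ[k] y) =
      L1rhs k H (Coalgebra.comul : H →ₗ[k] H ⊗[k] H) σ (x ⊗ₜ[k] y)) :
    CondL1 k H (Coalgebra.comul : H →ₗ[k] H ⊗[k] H) σ :=
  L1_of_L1_on_generators_general σ hL2 hL3 hL5 S hS hL1gen
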